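/- arXiv:2502.02150 — 2 statements merged into one kernel-verified Lean document; each statement's English description precedes it below -/
import Mathlib

section
/- Let p(z|x_t) be a conditional density, x̂_1 = E_{z~p(z|x_t)}[x_1], and J : ℝ^d → ℝ with e^{-J} twice continuously differentiable. If the Hessian of e^{-J} satisfies ‖∇²e^{-J}(x)‖_op ≤ λ_h for all x, and Σ_{11} is the conditional covariance of x_1 given x_t, then |Z_t(x_t) − e^{-J(x̂_1)}| ≤ (λ_h/2) · tr(Σ_{11}) ≤ (λ_h/2) · ‖Σ_{11}‖_2 · d, where Z_t(x_t) = E_{z~p(z|x_t)}[e^{-J(x_1)}]. -/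
/-!
Taylor's formula with integral remainder bounds `f x - f m - Df(m)(x - m)` by
`(λ/2)‖x - m‖²`. Integrating at the mean `m = E x` kills the linear term, so the error
of `E f(x) ≈ f(E x)` is at most `(λ/2) E‖x - m‖² = (λ/2) tr Σ`; finally each diagonal entry of
`Σ` is a value of its quadratic form at a unit vector, hence at most `s`.
-/

open MeasureTheory

theorem norm_sub_sub_fderiv_le_of_norm_iteratedFDeriv_two_le
    {E F : Type*} [NormedAddCommGroup E] [NormedSpace ℝ E]
    [NormedAddCommGroup F] [NormedSpace ℝ F] [CompleteSpace F]
    {f : E → F} (hf : ContDiff ℝ 2 f) {C : ℝ} (hC : ∀ z, ‖iteratedFDeriv ℝ 2 f z‖ ≤ C)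
    (x y : E) :
    ‖f (x + y) - f x - fderiv ℝ f x y‖ ≤ C / 2 * ‖y‖ ^ 2 := by
  have hTaylor := map_add_eq_sum_add_integral_iteratedFDeriv (n := 1) (x := x) (y := y)
    fun t _ => hf.contDiffAt
  norm_num [Finset.sum_range_succ] at hTaylor
  have hbound : ∀ t ∈ Set.Ioc (0 : ℝ) 1,
      ‖(1 - t) • iteratedFDeriv ℝ 2 f (x + t • y) (fun _ => y)‖ ≤ (1 - t) * (C * ‖y‖ ^ 2) := by
    intro t ht
    rw [norm_smul, Real.norm_of_nonneg (sub_nonneg.2 ht.2)]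
    gcongr
    · exact sub_nonneg.2 ht.2
    calc _ ≤ ‖iteratedFDeriv ℝ 2 f (x + t • y)‖ * ∏ _i : Fin 2, ‖y‖ :=
          (iteratedFDeriv ℝ 2 f (x + t • y)).le_opNorm _
      _ ≤ C * ‖y‖ ^ 2 := by simpa using mul_le_mul_of_nonneg_right (hC _) (by positivity)
  calc ‖f (x + y) - f x - fderiv ℝ f x y‖
      = ‖∫ t in (0 : ℝ)..1, (1 - t) • iteratedFDeriv ℝ 2 f (x + t • y) (fun _ => y)‖ := by
        rw [hTaylor]; congr 1; abel
    _ ≤ ∫ t in (0 : ℝ)..1, (1 - t) * (C * ‖y‖ ^ 2) :=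
        intervalIntegral.norm_integral_le_of_norm_le zero_le_one
          (.of_forall hbound) (by apply Continuous.intervalIntegrable; fun_prop)
    _ = C / 2 * ‖y‖ ^ 2 := by
      rw [intervalIntegral.integral_mul_const, intervalIntegral.integral_sub intervalIntegrable_const
        intervalIntegral.intervalIntegrable_id]
      norm_num; ring

theorem abs_integral_comp_sub_comp_integral_le
    {Ω E : Type*} [MeasurableSpace Ω] {μ : Measure Ω} [IsProbabilityMeasure μ]
    [NormedAddCommGroup E] [NormedSpace ℝ E] [CompleteSpace E]
    {X : Ω → E} (hX : MemLp X 2 μ) {f : E → ℝ} (hf : ContDiff ℝ 2 f) {C : ℝ}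
    (hC : ∀ z, ‖iteratedFDeriv ℝ 2 f z‖ ≤ C) (hfX : Integrable (fun ω => f (X ω)) μ) :
    |∫ ω, f (X ω) ∂μ - f (∫ ω, X ω ∂μ)| ≤ C / 2 * ∫ ω, ‖X ω - ∫ ω', X ω' ∂μ‖ ^ 2 ∂μ := by
  set m := ∫ ω, X ω ∂μ
  set L := fderiv ℝ f m
  have hXm : MemLp (fun ω => X ω - m) 2 μ := hX.sub (memLp_const m)
  have hXm1 : Integrable (fun ω => X ω - m) μ := hXm.integrable one_le_two
  have hXm2 : Integrable (fun ω => ‖X ω - m‖ ^ 2) μ :=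
    (memLp_two_iff_integrable_sq_norm hXm.1).1 hXm
  have hL : ∫ ω, L (X ω - m) ∂μ = 0 := by
    rw [L.integral_comp_comm hXm1, integral_sub (hX.integrable one_le_two) (integrable_const m)]
    simp [m]
  have hremainder : ∫ ω, f (X ω) ∂μ - f m = ∫ ω, (f (X ω) - f m - L (X ω - m)) ∂μ := by
    rw [integral_sub (f := fun ω => f (X ω) - f m) (hfX.sub (integrable_const _))
      (L.integrable_comp hXm1), hL, integral_sub hfX (integrable_const _)]
    simp
  rw [hremainder, ← integral_const_mul]
  refine (abs_integral_le_integral_abs).trans (integral_mono_of_nonneg ?_ (hXm2.const_mul _) ?_)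
  · exact .of_forall fun ω => abs_nonneg _
  · refine .of_forall fun ω => ?_
    simpa using norm_sub_sub_fderiv_le_of_norm_iteratedFDeriv_two_le hf hC m (X ω - m)

theorem Matrix.trace_le_mul_card_of_quadratic_form_le {ι : Type*} [Fintype ι]
    (A : Matrix ι ι ℝ) {s : ℝ}
    (h : ∀ u : EuclideanSpace ℝ ι, ∑ i, ∑ j, u i * A i j * u j ≤ s * ‖u‖ ^ 2) :
    A.trace ≤ s * Fintype.card ι := by
  classical
  have hdiag : ∀ i, A i i ≤ s := fun i => by
    simpa [PiLp.single_apply] using h (EuclideanSpace.single i 1)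
  simpa [Matrix.trace, mul_comm] using Finset.sum_le_sum fun i (_ : i ∈ Finset.univ) => hdiag i

theorem integral_norm_sq_eq_sum_integral_sq {Ω ι : Type*} [MeasurableSpace Ω] {μ : Measure Ω}
    [Fintype ι] {Y : Ω → EuclideanSpace ℝ ι} (hY : MemLp Y 2 μ) :
    ∫ ω, ‖Y ω‖ ^ 2 ∂μ = ∑ i, ∫ ω, Y ω i ^ 2 ∂μ := by
  have hcoord : ∀ i, MemLp (fun ω => Y ω i) 2 μ := fun i =>
    hY.continuousLinearMap_comp (EuclideanSpace.proj (𝕜 := ℝ) i)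
  simp_rw [EuclideanSpace.norm_sq_eq, Real.norm_eq_abs, sq_abs]
  exact integral_finsetSum _ fun i _ => (hcoord i).integrable_sq

/-- Error bound of the localized approximation of the normalizer: if the Hessian of
`e^{-J}` is bounded in operator norm by `lh` and `Σ₁₁` is the conditional covariance of
`x₁` given `x_t`, then `|Z_t(x_t) − e^{-J(x̂₁)}| ≤ (lh/2)·tr Σ₁₁ ≤ (lh/2)·‖Σ₁₁‖₂·d`. -/
theorem localized_normalizer_error_bound {Ω : Type*} [MeasurableSpace Ω]
    (μ : Measure Ω) [IsProbabilityMeasure μ]    -- the conditional law p(z|x_t)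
    {d : ℕ}
    (x1 : Ω → EuclideanSpace ℝ (Fin d))         -- ω ↦ x₁ component of z
    (hx1 : Integrable x1 μ)
    (hx2 : Integrable (fun ω => ‖x1 ω‖ ^ 2) μ)  -- finite second moment
    (J : EuclideanSpace ℝ (Fin d) → ℝ) (lh : ℝ)
    (hf : ContDiff ℝ 2 (fun x => Real.exp (-(J x))))
    (hhess : ∀ x, ‖iteratedFDeriv ℝ 2 (fun x => Real.exp (-(J x))) x‖ ≤ lh)
    (m : EuclideanSpace ℝ (Fin d)) (hm : m = ∫ ω, x1 ω ∂μ)  -- x̂₁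
    (Cov : Matrix (Fin d) (Fin d) ℝ)            -- Σ₁₁
    (hCov : ∀ i j, Cov i j = ∫ ω, (x1 ω i - m i) * (x1 ω j - m j) ∂μ)
    (s : ℝ)  -- the largest eigenvalue (L² norm) of Σ₁₁: bounds the quadratic form
    (hs : ∀ u : EuclideanSpace ℝ (Fin d), (∑ i, ∑ j, u i * Cov i j * u j) ≤ s * ‖u‖ ^ 2)
    (Zt : ℝ) (hZt : Zt = ∫ ω, Real.exp (-(J (x1 ω))) ∂μ)
    (hZint : Integrable (fun ω => Real.exp (-(J (x1 ω)))) μ) :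
    |Zt - Real.exp (-(J m))| ≤ (lh / 2) * Matrix.trace Cov ∧
    (lh / 2) * Matrix.trace Cov ≤ (lh / 2) * s * d := by
  have hlh : 0 ≤ lh := (norm_nonneg _).trans (hhess 0)
  have hX : MemLp x1 2 μ := (memLp_two_iff_integrable_sq_norm hx1.1).2 hx2
  have htrace : Cov.trace = ∫ ω, ‖x1 ω - m‖ ^ 2 ∂μ := by
    rw [integral_norm_sq_eq_sum_integral_sq (Y := fun ω => x1 ω - m) (hX.sub (memLp_const m))]
    simp [Matrix.trace, hCov, sq]
  constructor
  · rw [htrace, hZt, hm]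
    exact abs_integral_comp_sub_comp_integral_le hX hf hhess hZint
  · rw [mul_assoc]
    gcongr
    simpa using Cov.trace_le_mul_card_of_quadratic_form_le hs
end

section
/- Under the deterministic affine path x_t = α_t x_1 + β_t x_0 with β_t ≠ 0, the first-order localized guidance g_t^{local}(x_t) = −E_{z~p(z|x_t)}[(x_1 − x̂_1)(α̇_t x_1 + β̇_t x_0)^T] ∇J(x̂_1) equals g_t^{cov}(x_t) = −((α̇_t β_t − β̇_t α_t)/β_t) Σ_{1|t} ∇J(x̂_1), where Σ_{1|t} = E[(x_1−x̂_1)(x_1−x̂_1)^T | x_t]. -/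
/-! Eliminating `x₀ = (xₜ - α x₁)/β` writes the velocity as `c x₁ + (β'/β) xₜ` with
`c = (α'β - β'α)/β`, so its pairing with `∇J(x̂₁)` is `c ⟪x₁ - x̂₁, ∇J(x̂₁)⟫` plus a quantity not
depending on the sample. That quantity multiplies `x₁ - x̂₁`, whose expectation vanishes. -/

open MeasureTheory

section

variable {Ω E : Type*} [MeasurableSpace Ω] {μ : Measure Ω}

lemma integral_sub_integral_eq_zero [IsProbabilityMeasure μ] [NormedAddCommGroup E]
    [NormedSpace ℝ E] [CompleteSpace E] {X : Ω → E} (hX : Integrable X μ) :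
    ∫ ω, (X ω - ∫ ω', X ω' ∂μ) ∂μ = 0 := by
  rw [integral_sub hX (integrable_const _), integral_const, probReal_univ, one_smul, sub_self]

lemma integral_affine_smul_of_integral_eq_zero [NormedAddCommGroup E] [NormedSpace ℝ E]
    {Y : Ω → E} {φ : Ω → ℝ} (hY : Integrable Y μ) (hY0 : ∫ ω, Y ω ∂μ = 0)
    (hφY : Integrable (fun ω => φ ω • Y ω) μ) (a b : ℝ) :
    ∫ ω, (a * φ ω + b) • Y ω ∂μ = a • ∫ ω, φ ω • Y ω ∂μ := by
  simp_rw [add_smul, mul_smul]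
  rw [integral_add (by exact hφY.smul a) (by exact hY.smul b), integral_smul, integral_smul, hY0,
    smul_zero, add_zero]

lemma MeasureTheory.MemLp.integrable_inner_const_smul [IsFiniteMeasure μ] [NormedAddCommGroup E]
    [InnerProductSpace ℝ E] {Y : Ω → E} (hY : MemLp Y 2 μ) (g : E) :
    Integrable (fun ω => inner ℝ (Y ω) g • Y ω) μ :=
  memLp_one_iff_integrable.1 (hY.smul (hY.inner_const g))

end

lemma smul_add_smul_eq_of_eq_smul_add_smul {K V : Type*} [Field K] [AddCommGroup V] [Module K V]
    {α β α' β' : K} (hβ : β ≠ 0) {x₀ x₁ xₜ : V} (hpath : xₜ = α • x₁ + β • x₀) :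
    α' • x₁ + β' • x₀ = ((α' * β - β' * α) / β) • x₁ + (β' / β) • xₜ := by
  subst hpath
  match_scalars
  · field_simp
    ring
  · field_simp

theorem g_local_eq_g_cov_general {Ω : Type*} [MeasurableSpace Ω]
    (μ : Measure Ω) [IsProbabilityMeasure μ]    -- the conditional law given x_t
    {d : ℕ}
    (α β α' β' : ℝ) (hβ : β ≠ 0)
    (x0 x1 : Ω → EuclideanSpace ℝ (Fin d))
    (h1 : Integrable x1 μ)
    (h2 : Integrable (fun ω => ‖x1 ω‖ ^ 2) μ)   -- finite conditional second moments
    (xt : EuclideanSpace ℝ (Fin d))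
    (hpath : ∀ ω, xt = α • x1 ω + β • x0 ω)      -- deterministic interpolation
    (m : EuclideanSpace ℝ (Fin d)) (hm : m = ∫ ω, x1 ω ∂μ)  -- x̂₁
    (J : EuclideanSpace ℝ (Fin d) → ℝ)
    (gl gc : EuclideanSpace ℝ (Fin d))
    -- g^local: the matrix E[(x₁−x̂₁) vᵀ] applied to ∇J(x̂₁)
    (hgl : gl = -∫ ω,
        (inner ℝ (α' • x1 ω + β' • x0 ω) (gradient J m) : ℝ) • (x1 ω - m) ∂μ)
    -- g^cov: the covariance Σ_{1|t} applied to ∇J(x̂₁), with the schedule factor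
    (hgc : gc = -((α' * β - β' * α) / β) •
        ∫ ω, (inner ℝ (x1 ω - m) (gradient J m) : ℝ) • (x1 ω - m) ∂μ) :
    gl = gc := by
  set g := gradient J m
  set c := (α' * β - β' * α) / β
  have hcentered : MemLp (fun ω => x1 ω - m) 2 μ :=
    ((memLp_two_iff_integrable_sq_norm h1.1).2 h2).sub (memLp_const m)
  have hinner : ∀ ω, inner ℝ (α' • x1 ω + β' • x0 ω) g
      = c * inner ℝ (x1 ω - m) g + (c * inner ℝ m g + β' / β * inner ℝ xt g) := by
    intro ω
    rw [smul_add_smul_eq_of_eq_smul_add_smul hβ (hpath ω), inner_add_left, real_inner_smul_left,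
      real_inner_smul_left, inner_sub_left]
    ring
  have hmean : ∫ ω, (x1 ω - m) ∂μ = 0 := hm ▸ integral_sub_integral_eq_zero h1
  rw [hgl, hgc, neg_smul]
  simp_rw [hinner]
  rw [integral_affine_smul_of_integral_eq_zero (hcentered.integrable one_le_two) hmean
    (hcentered.integrable_inner_const_smul g)]

/-- Under the deterministic affine path `x_t = α_t x₁ + β_t x₀` with `β_t ≠ 0`, the
first-order localized guidance
`g^local = −E[(x₁−x̂₁)(α̇_t x₁ + β̇_t x₀)ᵀ] ∇J(x̂₁)` equals
`g^cov = −((α̇_t β_t − β̇_t α_t)/β_t) Σ_{1|t} ∇J(x̂₁)`. -/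
theorem g_local_eq_g_cov {Ω : Type*} [MeasurableSpace Ω]
    (μ : Measure Ω) [IsProbabilityMeasure μ]    -- the conditional law given x_t
    {d : ℕ}
    (α β α' β' : ℝ) (hβ : β ≠ 0)
    (x0 x1 : Ω → EuclideanSpace ℝ (Fin d))
    (h0 : Integrable x0 μ) (h1 : Integrable x1 μ)
    (h2 : Integrable (fun ω => ‖x1 ω‖ ^ 2) μ)   -- finite conditional second moments
    (xt : EuclideanSpace ℝ (Fin d))
    (hpath : ∀ ω, xt = α • x1 ω + β • x0 ω)      -- deterministic interpolation
    (m : EuclideanSpace ℝ (Fin d)) (hm : m = ∫ ω, x1 ω ∂μ)  -- x̂₁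
    (J : EuclideanSpace ℝ (Fin d) → ℝ)
    (gl gc : EuclideanSpace ℝ (Fin d))
    -- g^local: the matrix E[(x₁−x̂₁) vᵀ] applied to ∇J(x̂₁)
    (hgl : gl = -∫ ω,
        (inner ℝ (α' • x1 ω + β' • x0 ω) (gradient J m) : ℝ) • (x1 ω - m) ∂μ)
    -- g^cov: the covariance Σ_{1|t} applied to ∇J(x̂₁), with the schedule factor
    (hgc : gc = -((α' * β - β' * α) / β) •
        ∫ ω, (inner ℝ (x1 ω - m) (gradient J m) : ℝ) • (x1 ω - m) ∂μ) :
    gl = gc :=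
  g_local_eq_g_cov_general μ α β α' β' hβ x0 x1 h1 h2 xt hpath m hm J gl gc hgl hgc
end
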